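/- Let I be a nil ideal of a ring R. Then R is conjugate nil clean if and only if R/I is conjugate nil clean. -/

import Mathlib

/-!
Everything happens along a surjective ring map `φ : R → S` with nil kernel. Nil clean
decompositions lift, since idempotents lift along nil ideals and `a - e` is nilpotent as soon as
`φ (a - e)` is. Units lift too, and two idempotents `e`, `g` with the same image are conjugate by
`e g + (1 - e) (1 - g)`, a unit because it maps to `1`. Hence conjugacy of the idempotent parts
passes from `R` to `S` by mapping, and from `S` to `R` by lifting the conjugating unit.
-/

/-- Two idempotents are conjugate by a unit. -/
def ConjugateIdem {R : Type*} [Ring R] (e f : R) : Prop := ∃ u : Rˣ, e = u * f * ↑u⁻¹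

/-- `a` is nil clean: a sum of an idempotent and a nilpotent. -/
def IsNilCleanElem {R : Type*} [Ring R] (a : R) : Prop :=
  ∃ e n : R, IsIdempotentElem e ∧ IsNilpotent n ∧ a = e + n

/-- `a` is conjugate nil clean. -/
def IsConjNilCleanElem {R : Type*} [Ring R] (a : R) : Prop :=
  IsNilCleanElem a ∧ ∀ e n f m : R, IsIdempotentElem e → IsNilpotent n → a = e + n →
    IsIdempotentElem f → IsNilpotent m → a = f + m → ConjugateIdem e f

theorem isUnit_of_isUnit_mul_of_isUnit_mul {M : Type*} [Monoid M] {a b : M}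
    (hab : IsUnit (a * b)) (hba : IsUnit (b * a)) : IsUnit a := by
  obtain ⟨u, hu⟩ := hab
  obtain ⟨w, hw⟩ := hba
  have hr : a * (b * ↑u⁻¹) = 1 := by rw [← mul_assoc, ← hu, Units.mul_inv]
  have hl : (↑w⁻¹ * b) * a = 1 := by rw [mul_assoc, ← hw, Units.inv_mul]
  exact isUnit_iff_exists.2 ⟨_, hr, left_inv_eq_right_inv hl hr ▸ hl⟩

theorem IsIdempotentElem.units_conj {R : Type*} [Monoid R] {e : R} (he : IsIdempotentElem e)
    (u : Rˣ) : IsIdempotentElem (u * e * ↑u⁻¹) := by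
  rw [IsIdempotentElem]
  simp only [mul_assoc, Units.inv_mul_cancel_left]
  rw [← mul_assoc e, he.eq]

namespace ConjugateIdem

variable {R S : Type*} [Ring R] [Ring S] {e f g : R}

theorem trans (hef : ConjugateIdem e f) (hfg : ConjugateIdem f g) : ConjugateIdem e g := by
  obtain ⟨u, rfl⟩ := hef
  obtain ⟨w, rfl⟩ := hfg
  exact ⟨u * w, by simp only [Units.val_mul, mul_inv_rev, mul_assoc]⟩

theorem map (hef : ConjugateIdem e f) (φ : R →+* S) : ConjugateIdem (φ e) (φ f) := by
  obtain ⟨u, rfl⟩ := hef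
  exact ⟨Units.map φ u, by simp⟩

end ConjugateIdem

section NilKernel

variable {R S : Type*} [Ring R] [Ring S] {φ : R →+* S}
  (hφ : ∀ x ∈ RingHom.ker φ, IsNilpotent x)
include hφ

theorem isNilpotent_of_isNilpotent_map {a : R} (ha : IsNilpotent (φ a)) : IsNilpotent a := by
  obtain ⟨k, hk⟩ := ha
  obtain ⟨m, hm⟩ := hφ (a ^ k) (by rw [RingHom.mem_ker, map_pow, hk])
  exact ⟨k * m, by rw [pow_mul, hm]⟩

theorem isUnit_of_map_eq_one {x : R} (hx : φ x = 1) : IsUnit x := by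
  simpa using (hφ (1 - x) (by rw [RingHom.mem_ker, map_sub, map_one, hx, sub_self])).isUnit_one_sub

theorem units_map_surjective_of_ker_isNilpotent (hsurj : Function.Surjective φ) :
    Function.Surjective (Units.map (φ : R →* S)) := by
  intro U
  obtain ⟨a, ha⟩ := hsurj U
  obtain ⟨b, hb⟩ := hsurj ↑U⁻¹
  have hab : IsUnit (a * b) := isUnit_of_map_eq_one hφ (by simp [ha, hb])
  have hba : IsUnit (b * a) := isUnit_of_map_eq_one hφ (by simp [ha, hb])
  obtain ⟨v, rfl⟩ := isUnit_of_isUnit_mul_of_isUnit_mul hab hba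
  exact ⟨v, Units.ext ha⟩

theorem conjugateIdem_of_map_eq {e g : R} (he : IsIdempotentElem e) (hg : IsIdempotentElem g)
    (heg : φ e = φ g) : ConjugateIdem e g := by
  set u := e * g + (1 - e) * (1 - g)
  have hu : φ u = 1 := by
    simp only [u, map_add, map_mul, map_sub, map_one, heg, (hg.map φ).eq,
      (hg.map φ).one_sub.eq, add_sub_cancel]
  have hug : u * g = e * g := by
    rw [add_mul, mul_assoc, hg.eq, mul_assoc, hg.one_sub_mul_self, mul_zero, add_zero]
  have heu : e * u = e * g := by
    rw [mul_add, ← mul_assoc, he.eq, ← mul_assoc, he.mul_one_sub_self, zero_mul, add_zero]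
  obtain ⟨v, hv⟩ := isUnit_of_map_eq_one hφ hu
  exact ⟨v, (Units.eq_mul_inv_iff_mul_eq v).2 (by rw [hv, heu, hug])⟩

theorem exists_isIdempotentElem_isNilpotent_sub_of_map (hsurj : Function.Surjective φ) {a : R}
    {ε ν : S} (hε : IsIdempotentElem ε) (hν : IsNilpotent ν) (ha : φ a = ε + ν) :
    ∃ e : R, IsIdempotentElem e ∧ IsNilpotent (a - e) ∧ φ e = ε := by
  obtain ⟨e, he, rfl⟩ := exists_isIdempotentElem_eq_of_ker_isNilpotent φ hφ ε (hsurj ε) hε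
  refine ⟨e, he, isNilpotent_of_isNilpotent_map hφ ?_, rfl⟩
  rwa [map_sub, ha, add_sub_cancel_left]

theorem IsConjNilCleanElem.map (hsurj : Function.Surjective φ) {a : R}
    (ha : IsConjNilCleanElem a) : IsConjNilCleanElem (φ a) := by
  obtain ⟨⟨e, n, he, hn, rfl⟩, hconj⟩ := ha
  refine ⟨⟨φ e, φ n, he.map φ, hn.map φ, map_add φ e n⟩, ?_⟩
  intro ε ν ε' ν' hε hν hεν hε' hν' hεν'
  obtain ⟨f, hf, hnf, rfl⟩ :=
    exists_isIdempotentElem_isNilpotent_sub_of_map hφ hsurj hε hν hεν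
  obtain ⟨f', hf', hnf', rfl⟩ :=
    exists_isIdempotentElem_isNilpotent_sub_of_map hφ hsurj hε' hν' hεν'
  exact (hconj f _ f' _ hf hnf (add_sub_cancel f _).symm hf' hnf' (add_sub_cancel f' _).symm).map φ

theorem IsConjNilCleanElem.of_map (hsurj : Function.Surjective φ) {a : R}
    (ha : IsConjNilCleanElem (φ a)) : IsConjNilCleanElem a := by
  obtain ⟨⟨ε, ν, hε, hν, hεν⟩, hconj⟩ := ha
  obtain ⟨e₀, he₀, hne₀, -⟩ :=
    exists_isIdempotentElem_isNilpotent_sub_of_map hφ hsurj hε hν hεν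
  refine ⟨⟨e₀, a - e₀, he₀, hne₀, (add_sub_cancel e₀ a).symm⟩, ?_⟩
  rintro e n f m he hn rfl hf hm hfm
  obtain ⟨U, hU⟩ := hconj (φ e) (φ n) (φ f) (φ m) (he.map φ) (hn.map φ) (map_add φ e n)
    (hf.map φ) (hm.map φ) (by rw [hfm, map_add])
  obtain ⟨v, rfl⟩ := units_map_surjective_of_ker_isNilpotent hφ hsurj U
  have hmap : φ e = φ (v * f * ↑v⁻¹) := by simpa using hU
  exact (conjugateIdem_of_map_eq hφ he (hf.units_conj v) hmap).trans ⟨v, rfl⟩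

theorem forall_isConjNilCleanElem_iff_of_surjective (hsurj : Function.Surjective φ) :
    (∀ a : R, IsConjNilCleanElem a) ↔ ∀ b : S, IsConjNilCleanElem b :=
  ⟨fun h ↦ hsurj.forall.2 fun a ↦ (h a).map hφ hsurj,
    fun h a ↦ .of_map hφ hsurj (h (φ a))⟩

end NilKernel

/-- If `I` is a nil ideal of `R`, then `R` is conjugate nil clean iff `R/I` is
conjugate nil clean. -/
theorem conjNilClean_iff_quotient_conjNilClean {R : Type*} [Ring R] (I : TwoSidedIdeal R)
    (hI : ∀ x ∈ I, IsNilpotent x) :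
    (∀ a : R, IsConjNilCleanElem a) ↔ (∀ b : I.ringCon.Quotient, IsConjNilCleanElem b) := by
  have hker : ∀ x ∈ RingHom.ker I.ringCon.mk', IsNilpotent x := fun x hx ↦
    hI x (by rwa [← I.ker_ringCon_mk', TwoSidedIdeal.mem_ker, ← RingHom.mem_ker])
  exact forall_isConjNilCleanElem_iff_of_surjective hker I.ringCon.mk'_surjective
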